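/- Let n ≥ 4 and let v₁, …, vₙ be nonzero vectors in ℝ² that sum to zero such that no two of them are positively proportional. Then there exist vectors w₁, …, wₙ in ℝ³ with ‖wᵢ‖ = ‖vᵢ‖ for all i, w₁ + … + wₙ = 0, no two of the wᵢ positively proportional, and span{w₁, …, wₙ} = ℝ³. -/

import Mathlib

/-- Two vectors are positively proportional if one is a positive scalar multiple
of the other. -/
def PosProportional {V : Type*} [AddCommGroup V] [Module ℝ V] (u v : V) : Prop :=
  ∃ c : ℝ, 0 < c ∧ u = c • v

/-!
Choose `i ≠ j` with `vᵢ, vⱼ` linearly independent such that the other vectors still span the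
plane: two disjoint independent pairs exist among any four vectors, because when no two vectors
are positively proportional each one is parallel to at most one other. Embed the plane in `ℝ³`
and turn the pair `vᵢ, vⱼ` rigidly by a quarter turn about the line through `vᵢ + vⱼ`. Norms and
the sum are preserved; the two turned vectors leave the plane on opposite sides while all others
stay in it, so no two become positively proportional, and with the plane spanned by the others
they span `ℝ³`.
-/

open Module

section Proportional

variable {V W : Type*} [AddCommGroup V] [Module ℝ V] [AddCommGroup W] [Module ℝ W]

theorem PosProportional.of_map {f : V →ₗ[ℝ] W} (hf : Function.Injective f) {u v : V}
    (h : PosProportional (f u) (f v)) : PosProportional u v := by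
  obtain ⟨c, hc, huv⟩ := h
  exact ⟨c, hc, hf (by rw [huv, map_smul])⟩

theorem PosProportional.sign_inner_eq {E : Type*} [NormedAddCommGroup E] [InnerProductSpace ℝ E]
    {u v : E} (h : PosProportional u v) (e : E) :
    SignType.sign (inner ℝ u e) = SignType.sign (inner ℝ v e) := by
  obtain ⟨c, hc, rfl⟩ := h
  rw [real_inner_smul_left, sign_mul, sign_pos hc, one_mul]

theorem neg_of_smul_eq_of_not_posProportional {x y : V} {a : ℝ} (hy : y ≠ 0)
    (hxy : ¬ PosProportional y x) (h : a • x = y) : a < 0 := by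
  rcases lt_trichotomy a 0 with ha | rfl | ha
  · exact ha
  · exact absurd (by rw [← h, zero_smul]) hy
  · exact absurd ⟨a, ha, h.symm⟩ hxy

variable {α : Type*} {v : α → V} (hne : ∀ i, v i ≠ 0)
  (hprop : ∀ i j, i ≠ j → ¬ PosProportional (v i) (v j))
include hne hprop

/-- If `v b` and `v c` were both parallel to `v a`, they would be negative multiples of it and
hence positively proportional to each other. -/
theorem linearIndependent_pair_of_not_linearIndependent {a b c : α} (hab : a ≠ b) (hac : a ≠ c)
    (hbc : b ≠ c) (h : ¬ LinearIndependent ℝ ![v a, v b]) : LinearIndependent ℝ ![v a, v c] := by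
  by_contra h'
  simp only [LinearIndependent.pair_iff' (hne a), not_forall, not_not] at h h'
  obtain ⟨β, hβ⟩ := h
  obtain ⟨γ, hγ⟩ := h'
  have hβ0 := neg_of_smul_eq_of_not_posProportional (hne b) (hprop b a hab.symm) hβ
  have hγ0 := neg_of_smul_eq_of_not_posProportional (hne c) (hprop c a hac.symm) hγ
  refine hprop b c hbc ⟨β / γ, div_pos_of_neg_of_neg hβ0 hγ0, ?_⟩
  rw [← hβ, ← hγ, smul_smul, div_mul_cancel₀ _ hγ0.ne]

theorem linearIndependent_pairs_of_four {a b c d : α} (hab : a ≠ b) (hac : a ≠ c)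
    (had : a ≠ d) (hbc : b ≠ c) (hbd : b ≠ d) (hcd : c ≠ d) :
    (LinearIndependent ℝ ![v a, v b] ∧ LinearIndependent ℝ ![v c, v d]) ∨
      (LinearIndependent ℝ ![v a, v c] ∧ LinearIndependent ℝ ![v b, v d]) := by
  by_cases h : LinearIndependent ℝ ![v a, v b] ∧ LinearIndependent ℝ ![v c, v d]
  · exact .inl h
  have key := @linearIndependent_pair_of_not_linearIndependent _ _ _ _ _ hne hprop
  right
  rcases not_and_or.mp h with hab' | hcd'
  · exact ⟨key hab hac hbc hab',
      key hab.symm hbd had (by rwa [LinearIndependent.pair_symm_iff] at hab')⟩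
  · rw [LinearIndependent.pair_symm_iff (x := v a), LinearIndependent.pair_symm_iff (x := v b)]
    exact ⟨key hcd hac.symm had.symm hcd',
      key hcd.symm hbd.symm hbc.symm (by rwa [LinearIndependent.pair_symm_iff] at hcd')⟩

end Proportional

theorem exists_linearIndependent_pair_span_compl {V : Type*} [AddCommGroup V] [Module ℝ V]
    (hV : finrank ℝ V = 2) {n : ℕ} (hn : 4 ≤ n) {v : Fin n → V} (hne : ∀ i, v i ≠ 0)
    (hprop : ∀ i j, i ≠ j → ¬ PosProportional (v i) (v j)) :
    ∃ i j, i ≠ j ∧ LinearIndependent ℝ ![v i, v j] ∧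
      Submodule.span ℝ (v '' {i, j}ᶜ) = ⊤ := by
  suffices h : ∃ i j k l, i ≠ j ∧ k ∉ ({i, j} : Set (Fin n)) ∧ l ∉ ({i, j} : Set (Fin n)) ∧
      LinearIndependent ℝ ![v i, v j] ∧ LinearIndependent ℝ ![v k, v l] by
    obtain ⟨i, j, k, l, hij, hk, hl, hind, hind'⟩ := h
    refine ⟨i, j, hij, hind, top_le_iff.mp ?_⟩
    rw [← hind'.span_eq_top_of_card_eq_finrank (by simp [hV])]
    refine Submodule.span_mono ?_
    rintro _ ⟨m, rfl⟩
    fin_cases m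
    exacts [⟨k, hk, rfl⟩, ⟨l, hl, rfl⟩]
  have h4 := linearIndependent_pairs_of_four hne hprop (a := ⟨0, by omega⟩) (b := ⟨1, by omega⟩)
    (c := ⟨2, by omega⟩) (d := ⟨3, by omega⟩)
  rcases h4 (by simp) (by simp) (by simp) (by simp) (by simp) (by simp) with h | h
  · exact ⟨_, _, _, _, by simp, by simp, by simp, h⟩
  · exact ⟨_, _, _, _, by simp, by simp, by simp, h⟩

section Rotation

variable {E : Type*} [NormedAddCommGroup E] [InnerProductSpace ℝ E]
  (K : Submodule ℝ E) [K.HasOrthogonalProjection]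

/-- For a unit vector `e ∈ Kᗮ`, the quarter turn about `K` that carries the component of `x`
orthogonal to `K` onto the ray through `e`. -/
noncomputable def rotateToward (e x : E) : E :=
  K.starProjection x + ‖x - K.starProjection x‖ • e

variable {K} {e : E} (he : e ∈ Kᗮ) (he1 : ‖e‖ = 1)
include he he1

theorem inner_rotateToward (x : E) :
    inner ℝ (rotateToward K e x) e = ‖x - K.starProjection x‖ := by
  rw [rotateToward, inner_add_left, real_inner_smul_left, real_inner_self_eq_norm_sq, he1,
    K.inner_right_of_mem_orthogonal (K.starProjection_apply_mem x) he]
  ring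

theorem norm_rotateToward (x : E) : ‖rotateToward K e x‖ = ‖x‖ := by
  have hperp : inner ℝ (K.starProjection x) (x - K.starProjection x) = 0 :=
    K.inner_right_of_mem_orthogonal (K.starProjection_apply_mem x)
      (K.sub_starProjection_mem_orthogonal x)
  have hperp' : inner ℝ (K.starProjection x) (‖x - K.starProjection x‖ • e) = 0 :=
    K.inner_right_of_mem_orthogonal (K.starProjection_apply_mem x) (Kᗮ.smul_mem _ he)
  have hx := norm_add_sq_eq_norm_sq_add_norm_sq_real hperp
  have hr := norm_add_sq_eq_norm_sq_add_norm_sq_real hperp'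
  rw [add_sub_cancel] at hx
  rw [norm_smul, he1, mul_one, norm_norm] at hr
  rw [rotateToward, ← sq_eq_sq₀ (norm_nonneg _) (norm_nonneg _)]
  linear_combination hr - hx

omit he he1

theorem rotateToward_add_rotateToward_neg {x y : E} (hxy : x + y ∈ K) :
    rotateToward K e x + rotateToward K (-e) y = x + y := by
  have hyx : y - K.starProjection y = -(x - K.starProjection x) := by
    have := K.starProjection_eq_self_iff.mpr hxy
    rw [map_add] at this
    linear_combination (norm := module) -this
  rw [rotateToward, rotateToward, hyx, norm_neg, ← K.starProjection_eq_self_iff.mpr hxy, map_add]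
  module

theorem norm_sub_starProjection_pos {x : E} (hx : x ∉ K) : 0 < ‖x - K.starProjection x‖ := by
  rwa [norm_pos_iff, sub_ne_zero, Ne, eq_comm, K.starProjection_eq_self_iff]

end Rotation

theorem Finset.sum_ite_ite_eq_of_add_eq {α M : Type*} [Fintype α] [DecidableEq α]
    [AddCommMonoid M] {f : α → M} {i j : α} (hij : i ≠ j) {a b : M} (h : a + b = f i + f j) :
    ∑ m, (if m = i then a else if m = j then b else f m) = ∑ m, f m := by
  have hj : j ∈ univ.erase i := mem_erase.mpr ⟨hij.symm, mem_univ j⟩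
  rw [← add_sum_erase _ _ (mem_univ i), ← add_sum_erase _ _ hj, ← add_sum_erase _ _ (mem_univ i),
    ← add_sum_erase _ _ hj, ← add_assoc, ← add_assoc, if_pos rfl, if_neg hij.symm, if_pos rfl, h]
  congr 1
  refine sum_congr rfl fun m hm => ?_
  obtain ⟨hmj, hm⟩ := mem_erase.mp hm
  rw [if_neg (mem_erase.mp hm).1, if_neg hmj]

theorem LinearMap.apply_notMem_span_singleton_add {V W : Type*} [AddCommGroup V] [Module ℝ V]
    [AddCommGroup W] [Module ℝ W] {f : V →ₗ[ℝ] W} (hf : Function.Injective f) {x y : V}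
    (h : LinearIndependent ℝ ![x, y]) : f x ∉ ℝ ∙ f (x + y) := by
  intro hx
  obtain ⟨a, ha⟩ := Submodule.mem_span_singleton.mp hx
  rw [← map_smul] at ha
  have hxy := LinearIndependent.pair_iff.mp h (a - 1) a <| by
    linear_combination (norm := module) hf ha
  linarith [hxy.1, hxy.2]

section LiftPair

variable {F E α : Type*} [NormedAddCommGroup F] [InnerProductSpace ℝ F]
  [NormedAddCommGroup E] [InnerProductSpace ℝ E] [DecidableEq α]

noncomputable def liftPair (ι : F →ₗᵢ[ℝ] E) (e : E) (v : α → F) (i j : α) (m : α) : E :=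
  if m = i then rotateToward (ℝ ∙ ι (v i + v j)) e (ι (v i))
  else if m = j then rotateToward (ℝ ∙ ι (v i + v j)) (-e) (ι (v j))
  else ι (v m)

variable {ι : F →ₗᵢ[ℝ] E} {e : E} (he1 : ‖e‖ = 1)
  (hι : LinearMap.range ι.toLinearMap = (ℝ ∙ e)ᗮ) {v : α → F} {i j : α}

include hι in
theorem inner_apply_eq_zero_of_range_eq (x : F) : inner ℝ (ι x) e = 0 :=
  Submodule.mem_orthogonal_singleton_iff_inner_left.mp (hι ▸ LinearMap.mem_range_self _ x)

include hι in
theorem mem_orthogonal_span_apply_of_range_eq (x : F) : e ∈ (ℝ ∙ ι x)ᗮ :=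
  Submodule.mem_orthogonal_singleton_iff_inner_right.mpr (inner_apply_eq_zero_of_range_eq hι x)

include he1 hι in
theorem norm_liftPair (m : α) : ‖liftPair ι e v i j m‖ = ‖v m‖ := by
  have he := mem_orthogonal_span_apply_of_range_eq hι (v i + v j)
  unfold liftPair
  split_ifs with hi hj
  · rw [norm_rotateToward he he1, ι.norm_map, hi]
  · rw [norm_rotateToward (Submodule.neg_mem _ he) (by rwa [norm_neg]), ι.norm_map, hj]
  · exact ι.norm_map _

theorem sum_liftPair [Fintype α] (hij : i ≠ j) : ∑ m, liftPair ι e v i j m = ι (∑ m, v m) := by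
  rw [map_sum]
  exact Finset.sum_ite_ite_eq_of_add_eq hij (rotateToward_add_rotateToward_neg
    (by rw [← map_add]; exact Submodule.mem_span_singleton_self _))

include he1 hι in
theorem sign_inner_liftPair (hind : LinearIndependent ℝ ![v i, v j]) (m : α) :
    SignType.sign (inner ℝ (liftPair ι e v i j m) e) =
      if m = i then 1 else if m = j then -1 else 0 := by
  have he := mem_orthogonal_span_apply_of_range_eq hι (v i + v j)
  have hvi : ι (v i) ∉ ℝ ∙ ι (v i + v j) :=
    LinearMap.apply_notMem_span_singleton_add ι.injective hind
  have hvj : ι (v j) ∉ ℝ ∙ ι (v i + v j) := add_comm (v j) (v i) ▸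
    LinearMap.apply_notMem_span_singleton_add ι.injective (LinearIndependent.pair_symm_iff.mp hind)
  unfold liftPair
  split_ifs with hi hj
  · rw [inner_rotateToward he he1, sign_pos (norm_sub_starProjection_pos hvi)]
  · rw [← neg_neg (inner ℝ _ e), ← inner_neg_right,
      inner_rotateToward (Submodule.neg_mem _ he) (by rwa [norm_neg]),
      sign_neg (neg_neg_of_pos (norm_sub_starProjection_pos hvj))]
  · rw [inner_apply_eq_zero_of_range_eq hι, sign_zero]

include he1 hι in
theorem not_posProportional_liftPair (hind : LinearIndependent ℝ ![v i, v j])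
    (hprop : ∀ m₁ m₂, m₁ ≠ m₂ → ¬ PosProportional (v m₁) (v m₂)) {m₁ m₂ : α} (hm : m₁ ≠ m₂) :
    ¬ PosProportional (liftPair ι e v i j m₁) (liftPair ι e v i j m₂) := by
  intro h
  have hsign := h.sign_inner_eq e
  rw [sign_inner_liftPair he1 hι hind, sign_inner_liftPair he1 hι hind] at hsign
  unfold liftPair at h
  split_ifs at hsign h <;> first
    | exact hprop _ _ hm (h.of_map ι.injective)
    | simp_all

include hι in
theorem span_liftPair (hind : LinearIndependent ℝ ![v i, v j])
    (hspan : Submodule.span ℝ (v '' {i, j}ᶜ) = ⊤) :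
    Submodule.span ℝ (Set.range (liftPair ι e v i j)) = ⊤ := by
  set S := Submodule.span ℝ (Set.range (liftPair ι e v i j))
  have hrange : LinearMap.range ι.toLinearMap ≤ S := by
    rw [LinearMap.range_eq_map, ← hspan, Submodule.map_span_le]
    rintro _ ⟨m, hm, rfl⟩
    simp only [Set.mem_compl_iff, Set.mem_insert_iff, Set.mem_singleton_iff, not_or] at hm
    exact Submodule.subset_span ⟨m, by simp [liftPair, hm.1, hm.2]⟩
  have he : e ∈ S := by
    have hvi : ι (v i) ∉ ℝ ∙ ι (v i + v j) :=
      LinearMap.apply_notMem_span_singleton_add ι.injective hind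
    have hK : (ℝ ∙ ι (v i + v j)).starProjection (ι (v i)) ∈ S :=
      hrange ((Submodule.span_singleton_le_iff_mem _ _).mpr (LinearMap.mem_range_self _ _)
        (Submodule.starProjection_apply_mem _ _))
    have hwi : liftPair ι e v i j i ∈ S := Submodule.subset_span ⟨i, rfl⟩
    rw [liftPair, if_pos rfl, rotateToward] at hwi
    refine (S.smul_mem_iff (norm_sub_starProjection_pos hvi).ne').mp ?_
    simpa only [add_sub_cancel_left] using S.sub_mem hwi hK
  rw [eq_top_iff, ← Submodule.sup_orthogonal_of_hasOrthogonalProjection (K := ℝ ∙ e), ← hι]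
  exact sup_le ((Submodule.span_singleton_le_iff_mem _ _).mpr he) hrange

end LiftPair

theorem exists_linearIsometry_range_eq_orthogonal {F E : Type*} [NormedAddCommGroup F]
    [InnerProductSpace ℝ F] [FiniteDimensional ℝ F] [NormedAddCommGroup E]
    [InnerProductSpace ℝ E] [FiniteDimensional ℝ E] (h : finrank ℝ E = finrank ℝ F + 1) :
    ∃ (ι : F →ₗᵢ[ℝ] E) (e : E), ‖e‖ = 1 ∧ LinearMap.range ι.toLinearMap = (ℝ ∙ e)ᗮ := by
  have : Nontrivial E := Module.nontrivial_of_finrank_pos (R := ℝ) (h ▸ Nat.succ_pos _)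
  obtain ⟨e, he⟩ := exists_norm_eq E zero_le_one
  have hdim : finrank ℝ F = finrank ℝ (ℝ ∙ e)ᗮ := by
    have := (ℝ ∙ e).finrank_add_finrank_orthogonal
    rw [finrank_span_singleton (norm_ne_zero_iff.mp (he ▸ one_ne_zero))] at this
    omega
  let φ := (stdOrthonormalBasis ℝ F).equiv (stdOrthonormalBasis ℝ (ℝ ∙ e)ᗮ) (finCongr hdim)
  refine ⟨(ℝ ∙ e)ᗮ.subtypeₗᵢ.comp φ.toLinearIsometry, e, he, ?_⟩
  ext x
  exact ⟨by rintro ⟨y, rfl⟩; exact (φ y).2, fun hx => ⟨φ.symm ⟨x, hx⟩, by simp⟩⟩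

/-- **Lifting a planar equilibrated family to a fully equilibrated family in
`ℝ³`.**  If `n ≥ 4` nonzero vectors in `ℝ²` sum to zero with no two positively
proportional, then there are vectors in `ℝ³` with the same norms which sum to
zero, with no two positively proportional, and which span `ℝ³`. -/
theorem lift_equilibrated_to_R3 (n : ℕ) (hn : 4 ≤ n)
    (v : Fin n → EuclideanSpace ℝ (Fin 2)) (hne : ∀ i, v i ≠ 0)
    (hsum : (∑ i, v i) = 0)
    (hprop : ∀ i j, i ≠ j → ¬ PosProportional (v i) (v j)) :
    ∃ w : Fin n → EuclideanSpace ℝ (Fin 3),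
      (∀ i, ‖w i‖ = ‖v i‖) ∧
      (∑ i, w i) = 0 ∧
      (∀ i j, i ≠ j → ¬ PosProportional (w i) (w j)) ∧
      Submodule.span ℝ (Set.range w) = ⊤ := by
  obtain ⟨ι, e, he1, hι⟩ := exists_linearIsometry_range_eq_orthogonal
    (F := EuclideanSpace ℝ (Fin 2)) (E := EuclideanSpace ℝ (Fin 3)) (by simp)
  obtain ⟨i, j, hij, hind, hspan⟩ :=
    exists_linearIndependent_pair_span_compl (by simp) hn hne hprop
  refine ⟨liftPair ι e v i j, norm_liftPair he1 hι, ?_,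
    fun _ _ => not_posProportional_liftPair he1 hι hind hprop, span_liftPair hι hind hspan⟩
  rw [sum_liftPair hij, hsum, map_zero]
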